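/- Lemma (trade-off from uncertainty): Under the full hypotheses of Lemma 5 in the paper — $Q$ projection on $K$, $0 \le P$ with $P^2\le P$ on $K'$, $\mathcal{L}(\cdot) = \mathrm{tr}_{R'}[V(\cdot\otimes\rho_R)V^\dagger]$, $Z = V^\dagger(X_{K'}+X_{R'})V-(X_K+X_R)$, $W_K = \mathrm{tr}_R(\rho_R Z)$, and $\langle\mathcal{L}^\dagger(P)\rangle_{(1-Q)\rho(1-Q)} + \langle 1-\mathcal{L}^\dagger(P)\rangle_{Q\rho Q} = \varepsilon^2$ — the inequality $|\mathrm{tr}(\rho[Q, Y_K+W_K])| \le \varepsilon(\Delta' + \sqrt{\mathcal{F}})$ holds, where $Y_K = X_K - \mathcal{L}^\dagger(X_{K'})$, $\mathcal{F} = \mathcal{F}_{\rho_R}(X_R)$, $\Delta' = \sqrt{\mathcal{F}_{\rho\otimes\rho_R}(X_K - V^\dagger X_{K'}V)} + \sqrt{\mathcal{F}_{\rho\otimes\rho_R}(Z)}$. -/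

import Mathlib

open Matrix
open scoped Kronecker ComplexOrder

variable {n m : Type*} [Fintype n] [DecidableEq n] [Fintype m] [DecidableEq m]

open Classical in
/-- square root of a matrix (zero if not PSD) -/
noncomputable def msqrt (A : Matrix n n ℂ) : Matrix n n ℂ :=
  if h : A.PosSemidef then
    (h.1.eigenvectorUnitary : Matrix n n ℂ) *
      diagonal (fun i => ((Real.sqrt (h.1.eigenvalues i) : ℝ) : ℂ)) *
      (star (h.1.eigenvectorUnitary : Matrix n n ℂ))
  else 0

/-- trace norm -/
noncomputable def traceNorm (X : Matrix n m ℂ) : ℝ :=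
  ((msqrt (Xᴴ * X)).trace).re

def IsDensity (ρ : Matrix n n ℂ) : Prop := ρ.PosSemidef ∧ ρ.trace = 1

noncomputable def variance (σ A : Matrix n n ℂ) : ℝ :=
  (Matrix.trace (σ * (A * A))).re - ((Matrix.trace (σ * A)).re) ^ 2

/-- `L` is a symmetric logarithmic derivative for `(σ, W)`. -/
def IsSLD (σ W L : Matrix n n ℂ) : Prop :=
  L.IsHermitian ∧ L * σ + σ * L = ((-2 : ℂ) * Complex.I) • (W * σ - σ * W)

/-- SLD Fisher information value associated with a given SLD `L`. -/
noncomputable def fisherVal (σ L : Matrix n n ℂ) : ℝ :=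
  (Matrix.trace (σ * (L * L))).re

noncomputable def fidelity (ρ σ : Matrix n n ℂ) : ℝ :=
  ((msqrt (msqrt ρ * σ * msqrt ρ)).trace).re

noncomputable def purifiedDist (ρ σ : Matrix n n ℂ) : ℝ :=
  Real.sqrt (1 - fidelity ρ σ ^ 2)

/-- completely positive -/
def IsCompletelyPositive (Φ : Matrix n n ℂ →ₗ[ℂ] Matrix m m ℂ) : Prop :=
  ∀ (k : ℕ) (M : Matrix (Fin k × n) (Fin k × n) ℂ), M.PosSemidef →
    (Matrix.of fun (p q : Fin k × m) => (Φ (Matrix.of fun i j => M (p.1, i) (q.1, j))) p.2 q.2).PosSemidef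

def IsCPTP (Φ : Matrix n n ℂ →ₗ[ℂ] Matrix m m ℂ) : Prop :=
  IsCompletelyPositive Φ ∧ ∀ X, (Φ X).trace = X.trace

/-- partial trace over the second factor -/
noncomputable def ptraceR {k r : Type*} [Fintype k] [Fintype r]
    (M : Matrix (k × r) (k × r) ℂ) : Matrix k k ℂ :=
  Matrix.of fun i j => ∑ a : r, M (i, a) (j, a)

/-!
Put `σ = ρ ⊗ ρR`, `Q' = Q ⊗ 1`, `N = V†(P ⊗ 1)V` and `D = Q' - N`. Pushing the partial trace
onto `σ` turns the left-hand side into `tr(σ [Q', H])` with `H = V†(1 ⊗ XR')V - 1 ⊗ XR`, the sum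
of the two perturbations whose SLDs are `L1` and `LZ`. Since `N` commutes with `V†(1 ⊗ XR')V` and
`Q'` with `1 ⊗ XR`, we get `[Q', H] = [D, H] + [D, 1 ⊗ XR]`, and each term is bounded by the
uncertainty relation `|tr σ[B, W]| ≤ ⟨B²⟩_σ^{1/2} F^{1/2}` with `B = D`. Finally
`ε² = ⟨D²⟩_σ + tr σ(N - N²) ≥ ⟨D²⟩_σ` because `P - P² ≥ 0`.
-/

lemma commutator_eq_add_of_commute {R : Type*} [Ring R] {Q N A X : R} (hNA : Commute N A) (hQX : Commute Q X) :
    Q * (A - X) - (A - X) * Q =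
      ((Q - N) * (A - X) - (A - X) * (Q - N)) + ((Q - N) * X - X * (Q - N)) := by
  simp only [mul_sub, sub_mul, hNA.eq, hQX.eq]
  abel

namespace Matrix

section Kronecker

variable {l m n p α : Type*}

theorem sub_kronecker [NonUnitalNonAssocRing α] (A₁ A₂ : Matrix l m α) (B : Matrix n p α) :
    (A₁ - A₂) ⊗ₖ B = A₁ ⊗ₖ B - A₂ ⊗ₖ B := by
  ext; simp [sub_mul]

theorem kronecker_sub [NonUnitalNonAssocRing α] (A : Matrix l m α) (B₁ B₂ : Matrix n p α) :
    A ⊗ₖ (B₁ - B₂) = A ⊗ₖ B₁ - A ⊗ₖ B₂ := by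
  ext; simp [mul_sub]

theorem IsHermitian.kronecker [CommSemiring α] [StarRing α] {A : Matrix l l α}
    {B : Matrix n n α} (hA : A.IsHermitian) (hB : B.IsHermitian) : (A ⊗ₖ B).IsHermitian := by
  rw [IsHermitian, conjTranspose_kronecker, hA.eq, hB.eq]

variable [Fintype l] [DecidableEq l] [Fintype n] [DecidableEq n] [CommSemiring α]

lemma commute_kronecker_one_one_kronecker (A : Matrix l l α) (B : Matrix n n α) :
    Commute (A ⊗ₖ (1 : Matrix n n α)) ((1 : Matrix l l α) ⊗ₖ B) := by
  rw [Commute, SemiconjBy, ← mul_kronecker_mul, ← mul_kronecker_mul, mul_one, one_mul, mul_one,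
    one_mul]

omit [DecidableEq l] in
lemma kronecker_mul_mul_kronecker (A ρ : Matrix l l α) (B : Matrix n n α) :
    (A * ρ * A) ⊗ₖ B = (A ⊗ₖ 1) * (ρ ⊗ₖ B) * (A ⊗ₖ 1) := by
  rw [← mul_kronecker_mul, ← mul_kronecker_mul, one_mul, mul_one]

end Kronecker

section Isometry

variable {ι κ α : Type*} [Fintype ι] [Fintype κ] [CommSemiring α] [StarRing α]

lemma trace_mul_conj (V : Matrix κ ι α) (G : Matrix κ κ α) (S : Matrix ι ι α) :
    (G * (V * S * Vᴴ)).trace = (Vᴴ * G * V * S).trace := by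
  rw [trace_mul_comm, Matrix.mul_assoc (V * S), trace_mul_comm (V * S), ← Matrix.mul_assoc]

variable [DecidableEq κ] {V : Matrix κ ι α}

lemma conjTranspose_mul_mul_mul_conjTranspose_mul_mul (hV : V * Vᴴ = 1) (X Y : Matrix κ κ α) :
    Vᴴ * X * V * (Vᴴ * Y * V) = Vᴴ * (X * Y) * V := by
  simp only [Matrix.mul_assoc]
  rw [← Matrix.mul_assoc V, hV, Matrix.one_mul]

lemma Commute.conjTranspose_mul_mul (hV : V * Vᴴ = 1) {X Y : Matrix κ κ α} (h : Commute X Y) :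
    Commute (Vᴴ * X * V) (Vᴴ * Y * V) := by
  rw [Commute, SemiconjBy, conjTranspose_mul_mul_mul_conjTranspose_mul_mul hV,
    conjTranspose_mul_mul_mul_conjTranspose_mul_mul hV, h.eq]

end Isometry

section SemiInner

variable {ι : Type*} [Fintype ι] {σ : Matrix ι ι ℂ}

lemma PosSemidef.norm_trace_mul_mul_conjTranspose_le (hσ : σ.PosSemidef) (x y : Matrix ι ι ℂ) :
    ‖(y * σ * xᴴ).trace‖ ≤ √(x * σ * xᴴ).trace.re * √(y * σ * yᴴ).trace.re := by
  let := σ.toMatrixSeminormedAddCommGroup hσ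
  let := σ.toMatrixInnerProductSpace hσ
  exact norm_inner_le_norm (𝕜 := ℂ) x y

lemma PosSemidef.sqrt_re_trace_add_mul_le (hσ : σ.PosSemidef) (x y : Matrix ι ι ℂ) :
    √((x + y) * σ * (x + y)ᴴ).trace.re ≤ √(x * σ * xᴴ).trace.re + √(y * σ * yᴴ).trace.re := by
  let := σ.toMatrixSeminormedAddCommGroup hσ
  let := σ.toMatrixInnerProductSpace hσ
  have hnorm (z : Matrix ι ι ℂ) : ‖z‖ = √(z * σ * zᴴ).trace.re :=
    norm_eq_sqrt_re_inner (𝕜 := ℂ) z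
  simpa only [hnorm] using norm_add_le x y

lemma IsHermitian.trace_mul_mul_conjTranspose {A : Matrix ι ι ℂ} (hA : A.IsHermitian) :
    (A * σ * Aᴴ).trace = (σ * (A * A)).trace := by
  rw [hA.eq, trace_mul_cycle, trace_mul_comm]

end SemiInner

section SecondMoment

open scoped MatrixOrder

variable {ι κ : Type*} [Fintype ι] [DecidableEq ι] [Fintype κ] [DecidableEq κ]

lemma PosSemidef.re_trace_mul_nonneg {σ M : Matrix ι ι ℂ} (hσ : σ.PosSemidef)
    (hM : M.PosSemidef) : 0 ≤ (σ * M).trace.re := by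
  obtain ⟨B, rfl⟩ := CStarAlgebra.nonneg_iff_eq_star_mul_self.mp hM.nonneg
  rw [star_eq_conjTranspose, trace_mul_cycle', ← Matrix.mul_assoc]
  exact (Complex.nonneg_iff.mp (hσ.mul_mul_conjTranspose_same B).trace_nonneg).1

lemma re_trace_mul_sub_mul_sub_le {σ Q N : Matrix ι ι ℂ} (hσ : σ.PosSemidef) (hQ : Q * Q = Q)
    (hN : (N - N * N).PosSemidef) :
    (σ * ((Q - N) * (Q - N))).trace.re ≤
      (N * ((1 - Q) * σ * (1 - Q))).trace.re + ((1 - N) * (Q * σ * Q)).trace.re := by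
  have key : (N * ((1 - Q) * σ * (1 - Q))).trace + ((1 - N) * (Q * σ * Q)).trace =
      (σ * ((Q - N) * (Q - N))).trace + (σ * (N - N * N)).trace := by
    have h₁ : (N * σ).trace = (σ * N).trace := trace_mul_comm _ _
    have h₂ : (N * Q * σ).trace = (σ * N * Q).trace := by rw [trace_mul_cycle]
    have h₃ : (N * σ * Q).trace = (σ * Q * N).trace := by rw [trace_mul_cycle, trace_mul_cycle]
    have h₄ : (Q * σ * Q).trace = (σ * Q).trace := by rw [trace_mul_cycle, hQ, trace_mul_comm]
    simp only [Matrix.mul_sub, Matrix.sub_mul, Matrix.mul_one, Matrix.one_mul, hQ, trace_sub,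
      ← Matrix.mul_assoc]
    linear_combination h₁ - h₂ - h₃ + h₄
  have hre := congrArg Complex.re key
  simp only [Complex.add_re] at hre
  linarith [hσ.re_trace_mul_nonneg hN]

lemma re_trace_mul_sub_conj_sq_le {V : Matrix κ ι ℂ} (hV₁ : Vᴴ * V = 1) (hV₂ : V * Vᴴ = 1)
    {σ Q : Matrix ι ι ℂ} {G : Matrix κ κ ℂ} (hσ : σ.PosSemidef) (hQ : Q * Q = Q)
    (hG : (G - G * G).PosSemidef) :
    (σ * ((Q - Vᴴ * G * V) * (Q - Vᴴ * G * V))).trace.re ≤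
      (G * (V * ((1 - Q) * σ * (1 - Q)) * Vᴴ)).trace.re +
        ((1 - G) * (V * (Q * σ * Q) * Vᴴ)).trace.re := by
  have hN : Vᴴ * G * V - Vᴴ * G * V * (Vᴴ * G * V) = Vᴴ * (G - G * G) * V := by
    rw [conjTranspose_mul_mul_mul_conjTranspose_mul_mul hV₂, ← Matrix.sub_mul, ← Matrix.mul_sub]
  have h1G : Vᴴ * (1 - G) * V = 1 - Vᴴ * G * V := by
    rw [Matrix.mul_sub, Matrix.sub_mul, Matrix.mul_one, hV₁]
  rw [trace_mul_conj, trace_mul_conj, h1G]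
  exact re_trace_mul_sub_mul_sub_le hσ hQ (hN ▸ hG.conjTranspose_mul_mul_same V)

lemma re_trace_kronecker_mul_sub_conj_sq_le {k r k' r' : Type*} [Fintype k] [DecidableEq k]
    [Fintype r] [DecidableEq r] [Fintype k'] [DecidableEq k'] [Fintype r'] [DecidableEq r']
    {V : Matrix (k' × r') (k × r) ℂ} (hV₁ : Vᴴ * V = 1) (hV₂ : V * Vᴴ = 1)
    {Q ρ : Matrix k k ℂ} {ρR : Matrix r r ℂ} {P : Matrix k' k' ℂ}
    (hσ : (ρ ⊗ₖ ρR).PosSemidef) (hQ : Q * Q = Q) (hP : (P - P * P).PosSemidef) :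
    ((ρ ⊗ₖ ρR) * ((Q ⊗ₖ 1 - Vᴴ * (P ⊗ₖ (1 : Matrix r' r' ℂ)) * V) *
      (Q ⊗ₖ 1 - Vᴴ * (P ⊗ₖ (1 : Matrix r' r' ℂ)) * V))).trace.re ≤
      ((P ⊗ₖ 1) * (V * (((1 - Q) * ρ * (1 - Q)) ⊗ₖ ρR) * Vᴴ)).trace.re +
        ((1 - P ⊗ₖ 1) * (V * ((Q * ρ * Q) ⊗ₖ ρR) * Vᴴ)).trace.re := by
  have hQ' : Q ⊗ₖ (1 : Matrix r r ℂ) * Q ⊗ₖ 1 = Q ⊗ₖ 1 := by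
    rw [← mul_kronecker_mul, hQ, mul_one]
  have hG : (P ⊗ₖ (1 : Matrix r' r' ℂ) - P ⊗ₖ 1 * P ⊗ₖ 1).PosSemidef := by
    rw [← mul_kronecker_mul, mul_one, ← sub_kronecker]
    exact hP.kronecker PosSemidef.one
  rw [kronecker_mul_mul_kronecker, kronecker_mul_mul_kronecker, sub_kronecker, one_kronecker_one]
  exact re_trace_mul_sub_conj_sq_le hV₁ hV₂ hσ hQ' hG

end SecondMoment

end Matrix

section SLD

variable {ι κ : Type*} [Fintype ι] [Fintype κ] [DecidableEq κ] {σ W L : Matrix ι ι ℂ}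

lemma sqrt_fisherVal_add_le (hσ : σ.PosSemidef) {L₁ L₂ : Matrix ι ι ℂ}
    (h₁ : L₁.IsHermitian) (h₂ : L₂.IsHermitian) :
    √(fisherVal σ (L₁ + L₂)) ≤ √(fisherVal σ L₁) + √(fisherVal σ L₂) := by
  simpa only [fisherVal, (h₁.add h₂).trace_mul_mul_conjTranspose, h₁.trace_mul_mul_conjTranspose,
    h₂.trace_mul_mul_conjTranspose] using hσ.sqrt_re_trace_add_mul_le L₁ L₂

lemma fisherVal_one_kronecker [DecidableEq ι] {ρ : Matrix κ κ ℂ} (hρ : ρ.trace = 1)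
    (L : Matrix ι ι ℂ) : fisherVal (ρ ⊗ₖ σ) ((1 : Matrix κ κ ℂ) ⊗ₖ L) = fisherVal σ L := by
  rw [fisherVal, fisherVal, ← mul_kronecker_mul, ← mul_kronecker_mul, one_mul, mul_one,
    trace_kronecker, hρ, one_mul]

lemma IsSLD.add {W' L' : Matrix ι ι ℂ} (h : IsSLD σ W L) (h' : IsSLD σ W' L') :
    IsSLD σ (W + W') (L + L') := by
  refine ⟨h.1.add h'.1, ?_⟩
  rw [add_mul, mul_add, add_add_add_comm, h.2, h'.2, ← smul_add]
  congr 1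
  noncomm_ring

lemma IsSLD.one_kronecker [DecidableEq ι] {ρ : Matrix κ κ ℂ} (h : IsSLD σ W L) :
    IsSLD (ρ ⊗ₖ σ) ((1 : Matrix κ κ ℂ) ⊗ₖ W) (1 ⊗ₖ L) := by
  refine ⟨isHermitian_one.kronecker h.1, ?_⟩
  simp only [← mul_kronecker_mul, one_mul, mul_one, ← kronecker_add, ← kronecker_sub, h.2,
    kronecker_smul]

lemma IsSLD.trace_mul_commutator (h : IsSLD σ W L) (B : Matrix ι ι ℂ) :
    (σ * (B * W - W * B)).trace =
      (Complex.I / 2) * ((L * σ * B).trace + (B * σ * L).trace) := by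
  have hcomm : W * σ - σ * W = (Complex.I / 2) • (L * σ + σ * L) := by
    rw [h.2, smul_smul, show Complex.I / 2 * (-2 * Complex.I) = 1 by
      linear_combination -Complex.I_mul_I, one_smul]
  calc (σ * (B * W - W * B)).trace = ((W * σ - σ * W) * B).trace := by
        rw [mul_sub, sub_mul, trace_sub, trace_sub, ← mul_assoc, trace_mul_cycle, mul_assoc,
          ← mul_assoc σ W B]
    _ = _ := by
        rw [hcomm, smul_mul_assoc, trace_smul, add_mul, trace_add, smul_eq_mul, mul_assoc σ,
          trace_mul_cycle' σ L B, ← mul_assoc B σ L]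

/-- The SLD turns the commutator expectation into `i Re⟪B, L⟫_σ` for the semi-inner product
`⟪x, y⟫_σ = tr(y σ x†)`, so Cauchy–Schwarz applies. -/
lemma IsSLD.norm_trace_mul_commutator_le (hσ : σ.PosSemidef) (h : IsSLD σ W L)
    {B : Matrix ι ι ℂ} (hB : B.IsHermitian) :
    ‖(σ * (B * W - W * B)).trace‖ ≤ √(σ * (B * B)).trace.re * √(fisherVal σ L) := by
  have hBL := hσ.norm_trace_mul_mul_conjTranspose_le B L
  have hLB := hσ.norm_trace_mul_mul_conjTranspose_le L B
  rw [hB.trace_mul_mul_conjTranspose, h.1.trace_mul_mul_conjTranspose, hB.eq] at hBL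
  rw [hB.trace_mul_mul_conjTranspose, h.1.trace_mul_mul_conjTranspose, h.1.eq] at hLB
  rw [h.trace_mul_commutator, norm_mul, fisherVal]
  have hI : ‖Complex.I / 2‖ = 1 / 2 := by simp
  calc ‖Complex.I / 2‖ * ‖(L * σ * B).trace + (B * σ * L).trace‖
      ≤ 1 / 2 * (‖(L * σ * B).trace‖ + ‖(B * σ * L).trace‖) := by
        rw [hI]; gcongr; exact norm_add_le _ _
    _ ≤ _ := by linarith

end SLD

section PartialTrace

variable {κ ι : Type*} [Fintype κ] [Fintype ι]

lemma ptraceR_add (M N : Matrix (κ × ι) (κ × ι) ℂ) :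
    ptraceR (M + N) = ptraceR M + ptraceR N := by
  ext; simp [ptraceR, Finset.sum_add_distrib]

lemma ptraceR_sub (M N : Matrix (κ × ι) (κ × ι) ℂ) :
    ptraceR (M - N) = ptraceR M - ptraceR N := by
  ext; simp [ptraceR, Finset.sum_sub_distrib]

lemma ptraceR_kronecker (A : Matrix κ κ ℂ) (B : Matrix ι ι ℂ) :
    ptraceR (A ⊗ₖ B) = B.trace • A := by
  ext; simp [ptraceR, trace, Finset.mul_sum, mul_comm]

variable [DecidableEq κ]

lemma trace_mul_ptraceR (A : Matrix κ κ ℂ) (B : Matrix ι ι ℂ) (M : Matrix (κ × ι) (κ × ι) ℂ) :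
    (A * ptraceR ((1 ⊗ₖ B) * M)).trace = ((A ⊗ₖ B) * M).trace := by
  simp only [trace, ptraceR, mul_apply, kroneckerMap_apply, one_apply, ite_mul, one_mul, zero_mul,
    Fintype.sum_prod_type, Finset.sum_ite_irrel, Finset.sum_const_zero, Finset.sum_ite_eq,
    Finset.mem_univ, ↓reduceIte, diag_apply, of_apply, Finset.mul_sum, mul_assoc]
  exact Finset.sum_congr rfl fun _ _ => Finset.sum_comm

lemma trace_mul_commutator_ptraceR [DecidableEq ι] (ρ Q : Matrix κ κ ℂ) (B : Matrix ι ι ℂ)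
    (M : Matrix (κ × ι) (κ × ι) ℂ) :
    (ρ * (Q * ptraceR ((1 ⊗ₖ B) * M) - ptraceR ((1 ⊗ₖ B) * M) * Q)).trace =
      ((ρ ⊗ₖ B) * ((Q ⊗ₖ 1) * M - M * (Q ⊗ₖ 1))).trace := by
  rw [mul_sub, mul_sub, trace_sub, trace_sub]
  congr 1
  · rw [← mul_assoc, trace_mul_ptraceR, ← mul_assoc, ← mul_kronecker_mul, mul_one]
  · rw [trace_mul_cycle', ← mul_assoc, trace_mul_ptraceR, trace_mul_cycle', ← mul_assoc,
      ← mul_kronecker_mul, one_mul]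

end PartialTrace


theorem tradeoff_from_uncertainty_general
    {k r k' r' : Type*} [Fintype k] [DecidableEq k] [Fintype r] [DecidableEq r]
    [Fintype k'] [DecidableEq k'] [Fintype r'] [DecidableEq r']
    (V : Matrix (k' × r') (k × r) ℂ) (hV1 : Vᴴ * V = 1) (hV2 : V * Vᴴ = 1)
    (Q : Matrix k k ℂ) (hQh : Q.IsHermitian) (hQp : Q * Q = Q)
    (P : Matrix k' k' ℂ) (hP : P.PosSemidef) (hP2 : (P - P * P).PosSemidef)
    (ρ : Matrix k k ℂ) (hρ : IsDensity ρ) (ρR : Matrix r r ℂ) (hρR : IsDensity ρR)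
    (XK : Matrix k k ℂ) (XR : Matrix r r ℂ)
    (XK' : Matrix k' k' ℂ)
    (XR' : Matrix r' r' ℂ)
    (Z : Matrix (k × r) (k × r) ℂ)
    (hZ : Z = Vᴴ * (XK' ⊗ₖ (1 : Matrix r' r' ℂ) + (1 : Matrix k' k' ℂ) ⊗ₖ XR') * V -
      (XK ⊗ₖ (1 : Matrix r r ℂ) + (1 : Matrix k k ℂ) ⊗ₖ XR))
    (LR : Matrix r r ℂ) (hLR : IsSLD ρR XR LR)
    (L1 : Matrix (k × r) (k × r) ℂ)
    (hL1 : IsSLD (ρ ⊗ₖ ρR)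
      (XK ⊗ₖ (1 : Matrix r r ℂ) - Vᴴ * (XK' ⊗ₖ (1 : Matrix r' r' ℂ)) * V) L1)
    (LZ : Matrix (k × r) (k × r) ℂ) (hLZ : IsSLD (ρ ⊗ₖ ρR) Z LZ)
    (ε : ℝ) (hεpos : 0 ≤ ε)
    (hε : (Matrix.trace ((P ⊗ₖ (1 : Matrix r' r' ℂ)) *
            (V * ((((1 - Q) * ρ * (1 - Q)) ⊗ₖ ρR)) * Vᴴ))).re +
          (Matrix.trace (((1 : Matrix (k' × r') (k' × r') ℂ) - P ⊗ₖ (1 : Matrix r' r' ℂ)) *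
            (V * (((Q * ρ * Q) ⊗ₖ ρR)) * Vᴴ))).re = ε ^ 2) :
    ‖(Matrix.trace (ρ *
        (Q * ((XK - ptraceR (((1 : Matrix k k ℂ) ⊗ₖ ρR) *
                (Vᴴ * (XK' ⊗ₖ (1 : Matrix r' r' ℂ)) * V))) +
              ptraceR (((1 : Matrix k k ℂ) ⊗ₖ ρR) * Z)) -
         ((XK - ptraceR (((1 : Matrix k k ℂ) ⊗ₖ ρR) *
                (Vᴴ * (XK' ⊗ₖ (1 : Matrix r' r' ℂ)) * V))) +
              ptraceR (((1 : Matrix k k ℂ) ⊗ₖ ρR) * Z)) * Q)))‖ ≤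
      ε * ((Real.sqrt (fisherVal (ρ ⊗ₖ ρR) L1) + Real.sqrt (fisherVal (ρ ⊗ₖ ρR) LZ)) +
        Real.sqrt (fisherVal ρR LR)) := by
  obtain ⟨hρ, hρ1⟩ := hρ
  obtain ⟨hρR, hρR1⟩ := hρR
  have hσ : (ρ ⊗ₖ ρR).PosSemidef := hρ.kronecker hρR
  set D := Q ⊗ₖ (1 : Matrix r r ℂ) - Vᴴ * (P ⊗ₖ (1 : Matrix r' r' ℂ)) * V
  have hD : D.IsHermitian := (hQh.kronecker isHermitian_one).sub
    (isHermitian_conjTranspose_mul_mul V (hP.1.kronecker isHermitian_one))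
  have hDε : √((ρ ⊗ₖ ρR) * (D * D)).trace.re ≤ ε := by
    rw [Real.sqrt_le_left hεpos, ← hε]
    exact re_trace_kronecker_mul_sub_conj_sq_le hV1 hV2 hσ hQp hP2
  set W := XK ⊗ₖ (1 : Matrix r r ℂ) - Vᴴ * (XK' ⊗ₖ (1 : Matrix r' r' ℂ)) * V + Z with hW
  have hE : XK - ptraceR (((1 : Matrix k k ℂ) ⊗ₖ ρR) * (Vᴴ * (XK' ⊗ₖ (1 : Matrix r' r' ℂ)) * V)) +
      ptraceR ((1 ⊗ₖ ρR) * Z) = ptraceR ((1 ⊗ₖ ρR) * W) := by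
    rw [Matrix.mul_add, Matrix.mul_sub, ptraceR_add, ptraceR_sub, ← mul_kronecker_mul, one_mul,
      mul_one, ptraceR_kronecker, hρR1, one_smul]
  have hH : W = Vᴴ * ((1 : Matrix k' k' ℂ) ⊗ₖ XR') * V - (1 : Matrix k k ℂ) ⊗ₖ XR := by
    rw [hW, hZ, Matrix.mul_add, Matrix.add_mul]
    abel
  have hNA := (commute_kronecker_one_one_kronecker P XR').conjTranspose_mul_mul hV2
  rw [hE, trace_mul_commutator_ptraceR, hH,
    commutator_eq_add_of_commute hNA (commute_kronecker_one_one_kronecker Q XR), ← hH,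
    Matrix.mul_add, trace_add]
  calc _ ≤ _ := norm_add_le _ _
    _ ≤ _ := add_le_add ((hL1.add hLZ).norm_trace_mul_commutator_le hσ hD)
        (hLR.one_kronecker.norm_trace_mul_commutator_le hσ hD)
    _ ≤ ε * (√(fisherVal (ρ ⊗ₖ ρR) L1) + √(fisherVal (ρ ⊗ₖ ρR) LZ)) + ε * √(fisherVal ρR LR) := by
        rw [fisherVal_one_kronecker hρ1]
        gcongr
        exact sqrt_fisherVal_add_le hσ hL1.1 hLZ.1
    _ = _ := by ring

/-- Key trade-off lemma: commutator expectation bounded by ε times Fisher terms. -/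
theorem tradeoff_from_uncertainty
    {k r k' r' : Type*} [Fintype k] [DecidableEq k] [Fintype r] [DecidableEq r]
    [Fintype k'] [DecidableEq k'] [Fintype r'] [DecidableEq r']
    (V : Matrix (k' × r') (k × r) ℂ) (hV1 : Vᴴ * V = 1) (hV2 : V * Vᴴ = 1)
    (Q : Matrix k k ℂ) (hQh : Q.IsHermitian) (hQp : Q * Q = Q)
    (P : Matrix k' k' ℂ) (hP : P.PosSemidef) (hP2 : (P - P * P).PosSemidef)
    (ρ : Matrix k k ℂ) (hρ : IsDensity ρ) (ρR : Matrix r r ℂ) (hρR : IsDensity ρR)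
    (XK : Matrix k k ℂ) (hXK : XK.IsHermitian) (XR : Matrix r r ℂ) (hXR : XR.IsHermitian)
    (XK' : Matrix k' k' ℂ) (hXK' : XK'.IsHermitian)
    (XR' : Matrix r' r' ℂ) (hXR' : XR'.IsHermitian)
    (Z : Matrix (k × r) (k × r) ℂ)
    (hZ : Z = Vᴴ * (XK' ⊗ₖ (1 : Matrix r' r' ℂ) + (1 : Matrix k' k' ℂ) ⊗ₖ XR') * V -
      (XK ⊗ₖ (1 : Matrix r r ℂ) + (1 : Matrix k k ℂ) ⊗ₖ XR))
    (LR : Matrix r r ℂ) (hLR : IsSLD ρR XR LR)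
    (L1 : Matrix (k × r) (k × r) ℂ)
    (hL1 : IsSLD (ρ ⊗ₖ ρR)
      (XK ⊗ₖ (1 : Matrix r r ℂ) - Vᴴ * (XK' ⊗ₖ (1 : Matrix r' r' ℂ)) * V) L1)
    (LZ : Matrix (k × r) (k × r) ℂ) (hLZ : IsSLD (ρ ⊗ₖ ρR) Z LZ)
    (ε : ℝ) (hεpos : 0 ≤ ε)
    (hε : (Matrix.trace ((P ⊗ₖ (1 : Matrix r' r' ℂ)) *
            (V * ((((1 - Q) * ρ * (1 - Q)) ⊗ₖ ρR)) * Vᴴ))).re +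
          (Matrix.trace (((1 : Matrix (k' × r') (k' × r') ℂ) - P ⊗ₖ (1 : Matrix r' r' ℂ)) *
            (V * (((Q * ρ * Q) ⊗ₖ ρR)) * Vᴴ))).re = ε ^ 2) :
    ‖(Matrix.trace (ρ *
        (Q * ((XK - ptraceR (((1 : Matrix k k ℂ) ⊗ₖ ρR) *
                (Vᴴ * (XK' ⊗ₖ (1 : Matrix r' r' ℂ)) * V))) +
              ptraceR (((1 : Matrix k k ℂ) ⊗ₖ ρR) * Z)) -
         ((XK - ptraceR (((1 : Matrix k k ℂ) ⊗ₖ ρR) *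
                (Vᴴ * (XK' ⊗ₖ (1 : Matrix r' r' ℂ)) * V))) +
              ptraceR (((1 : Matrix k k ℂ) ⊗ₖ ρR) * Z)) * Q)))‖ ≤
      ε * ((Real.sqrt (fisherVal (ρ ⊗ₖ ρR) L1) + Real.sqrt (fisherVal (ρ ⊗ₖ ρR) LZ)) +
        Real.sqrt (fisherVal ρR LR)) :=
  tradeoff_from_uncertainty_general V hV1 hV2 Q hQh hQp P hP hP2 ρ hρ ρR hρR XK XR XK' XR' Z hZ LR
    hLR L1 hL1 LZ hLZ ε hεpos hε
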